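/- Let Q be a non-empty finite poset. Then for every n ≥ 1, La(n, P_{l(Q)+2}, Q ⊕ 1) ≤ max over 0 ≤ j ≤ n of C(n,j) · La(j, P_{l(Q)+1}, Q). -/

import Mathlib

open Classical Finset

noncomputable section

/-- `G` is a copy of the finite poset `α` among the subsets of `[n]`:
there is a bijection `φ` from `α` onto `G` such that `x ≤ y` implies `φ x ⊆ φ y`. -/
def IsCopy (α : Type) [PartialOrder α] [Fintype α] {n : ℕ}
    (G : Finset (Finset (Fin n))) : Prop :=
  ∃ φ : α → Finset (Fin n), Function.Injective φ ∧
    Finset.image φ Finset.univ = G ∧ ∀ x y : α, x ≤ y → φ x ⊆ φ y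

/-- `copyCount α F` is the number of copies of the poset `α` in the family `F`,
copies being counted as subfamilies of `F`. -/
def copyCount (α : Type) [PartialOrder α] [Fintype α] {n : ℕ}
    (F : Finset (Finset (Fin n))) : ℕ :=
  (F.powerset.filter fun G => IsCopy α G).card

/-- `La n P Q`: the maximum number of copies of `Q` in a `P`-free family of subsets of `[n]`. -/
def La (n : ℕ) (P Q : Type) [PartialOrder P] [Fintype P]
    [PartialOrder Q] [Fintype Q] : ℕ :=
  ((Finset.univ : Finset (Finset (Finset (Fin n)))).filter fun F =>
    copyCount P F = 0).sup (copyCount Q)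

/-- `La2 n P₁ P₂ Q`: the maximum number of copies of `Q` in a family of subsets of `[n]`
that is both `P₁`-free and `P₂`-free. -/
def La2 (n : ℕ) (P₁ P₂ Q : Type) [PartialOrder P₁] [Fintype P₁]
    [PartialOrder P₂] [Fintype P₂] [PartialOrder Q] [Fintype Q] : ℕ :=
  ((Finset.univ : Finset (Finset (Finset (Fin n)))).filter fun F =>
    copyCount P₁ F = 0 ∧ copyCount P₂ F = 0).sup (copyCount Q)

/-- the full `k`-th level of `2^[n]`. -/
def level (n k : ℕ) : Finset (Finset (Fin n)) :=
  Finset.univ.filter fun A => A.card = k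

/-- `γ^r_{i,j}(F)`: the number of `r`-element subfamilies of `F` whose intersection has
size `i` and whose union has size `j`. -/
def gammaCount (r n i j : ℕ) (F : Finset (Finset (Fin n))) : ℕ :=
  (F.powerset.filter fun G =>
    G.card = r ∧ (G.inf id).card = i ∧ (G.sup id).card = j).card

/-- `β^r_i(F)`: the number of `r`-element subfamilies of `F` whose intersection has size `i`. -/
def betaCount (r n i : ℕ) (F : Finset (Finset (Fin n))) : ℕ :=
  (F.powerset.filter fun G => G.card = r ∧ (G.inf id).card = i).card

/-- the complete multi-level poset `K_{r 0, …, r (s-1)}`: level `i` has `r i` elements,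
and every element of level `i` is below every element of level `j` whenever `i < j`. -/
def KP {s : ℕ} (r : Fin s → ℕ) : Type := Σ i, Fin (r i)

namespace KP

variable {s : ℕ} {r : Fin s → ℕ}

def le (x y : KP r) : Prop := x = y ∨ x.1 < y.1

instance : PartialOrder (KP r) where
  le := KP.le
  le_refl x := Or.inl rfl
  le_trans x y z hxy hyz := by
    rcases hxy with rfl | h
    · exact hyz
    · rcases hyz with rfl | h'
      · exact Or.inr h
      · exact Or.inr (h.trans h')
  le_antisymm x y hxy hyx := by
    rcases hxy with rfl | h
    · rfl
    · rcases hyx with rfl | h'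
      · rfl
      · exact absurd (h.trans h') (lt_irrefl _)

instance : Fintype (KP r) := inferInstanceAs (Fintype (Σ i, Fin (r i)))

end KP

/-- the chain (totally ordered poset) with `k` elements. -/
abbrev PChain (k : ℕ) := Fin k

/-- `∨_r = K_{1,r}` -/
abbrev VeePoset (r : ℕ) := KP ![1, r]

/-- `∧_r = K_{r,1}` -/
abbrev WedgePoset (r : ℕ) := KP ![r, 1]

/-- the generalized diamond `D_r = K_{1,r,1}` -/
abbrev DiamondPoset (r : ℕ) := KP ![1, r, 1]

/-- the butterfly poset `B = K_{2,2}` -/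
abbrev Butterfly := KP ![2, 2]

/-- the height `l(Q)` of a finite poset: the number of elements of a longest chain. -/
def height (Q : Type) [PartialOrder Q] [Fintype Q] : ℕ :=
  ((Finset.univ : Finset (Finset Q)).filter fun C : Finset Q =>
    IsChain (· ≤ ·) (↑C : Set Q)).sup Finset.card


/-- `Q₁ ⊗_r Q₂`: disjoint copies of `Q₁` and `Q₂` with an `r`-element antichain in between;
everything in `Q₁` is below the middle elements and below everything in `Q₂`,
and the middle elements are below everything in `Q₂`. -/
inductive Otimes (Q₁ Q₂ : Type) (r : ℕ) : Type
  | bot : Q₁ → Otimes Q₁ Q₂ r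
  | mid : Fin r → Otimes Q₁ Q₂ r
  | top : Q₂ → Otimes Q₁ Q₂ r

namespace Otimes

variable {Q₁ Q₂ : Type} {r : ℕ}

def le [PartialOrder Q₁] [PartialOrder Q₂] : Otimes Q₁ Q₂ r → Otimes Q₁ Q₂ r → Prop
  | bot a, bot b => a ≤ b
  | bot _, mid _ => True
  | bot _, top _ => True
  | mid i, mid j => i = j
  | mid _, top _ => True
  | top a, top b => a ≤ b
  | _, _ => False

instance [PartialOrder Q₁] [PartialOrder Q₂] : PartialOrder (Otimes Q₁ Q₂ r) where
  le := Otimes.le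
  le_refl x := by cases x <;> simp [Otimes.le]
  le_trans x y z hxy hyz := by
    cases x <;> cases y <;> cases z <;> simp_all [Otimes.le] <;>
      first
        | exact le_trans hxy hyz
        | trivial
  le_antisymm x y hxy hyx := by
    cases x <;> cases y <;> simp_all [Otimes.le] <;>
      first
        | exact le_antisymm hxy hyx
        | rfl

instance [Fintype Q₁] [Fintype Q₂] : Fintype (Otimes Q₁ Q₂ r) :=
  Fintype.ofEquiv (Q₁ ⊕ Fin r ⊕ Q₂)
    { toFun := fun x => match x with
        | Sum.inl a => bot a
        | Sum.inr (Sum.inl i) => mid i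
        | Sum.inr (Sum.inr b) => top b
      invFun := fun x => match x with
        | bot a => Sum.inl a
        | mid i => Sum.inr (Sum.inl i)
        | top b => Sum.inr (Sum.inr b)
      left_inv := fun x => by rcases x with a | (i | b) <;> rfl
      right_inv := fun x => by cases x <;> rfl }

end Otimes

/-- `Q ⊕ r`: the poset obtained from `Q` by adding an antichain of `r` new elements,
each above every element of `Q`. -/
inductive Oplus (Q : Type) (r : ℕ) : Type
  | base : Q → Oplus Q r
  | new : Fin r → Oplus Q r

namespace Oplus

variable {Q : Type} {r : ℕ}

def le [PartialOrder Q] : Oplus Q r → Oplus Q r → Prop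
  | base a, base b => a ≤ b
  | base _, new _ => True
  | new i, new j => i = j
  | new _, base _ => False

instance [PartialOrder Q] : PartialOrder (Oplus Q r) where
  le := Oplus.le
  le_refl x := by cases x <;> simp [Oplus.le]
  le_trans x y z hxy hyz := by
    cases x <;> cases y <;> cases z <;> simp_all [Oplus.le] <;>
      first
        | exact le_trans hxy hyz
        | trivial
  le_antisymm x y hxy hyx := by
    cases x <;> cases y <;> simp_all [Oplus.le] <;>
      first
        | exact le_antisymm hxy hyx
        | rfl

instance [Fintype Q] : Fintype (Oplus Q r) :=
  Fintype.ofEquiv (Q ⊕ Fin r)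
    { toFun := fun x => match x with
        | Sum.inl a => base a
        | Sum.inr i => new i
      invFun := fun x => match x with
        | base a => Sum.inl a
        | new i => Sum.inr i
      left_inv := fun x => by rcases x with a | i <;> rfl
      right_inv := fun x => by cases x <;> rfl }

end Oplus

/-- the poset `N`: four elements `a, b, c, d` with `a ≤ c`, `b ≤ c`, `b ≤ d`
and no other nontrivial relations. -/
inductive NPoset : Type
  | a | b | c | d
  deriving DecidableEq

instance : Fintype NPoset :=
  ⟨{NPoset.a, NPoset.b, NPoset.c, NPoset.d}, fun x => by cases x <;> simp⟩

namespace NPoset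

def le : NPoset → NPoset → Prop := fun x y =>
  x = y ∨ (x = a ∧ y = c) ∨ (x = b ∧ y = c) ∨ (x = b ∧ y = d)

instance : DecidableRel le := fun x y => by unfold le; infer_instance

theorem le_refl' : ∀ x : NPoset, le x x := by decide
theorem le_trans' : ∀ x y z : NPoset, le x y → le y z → le x z := by decide
theorem le_antisymm' : ∀ x y : NPoset, le x y → le y x → x = y := by decide

instance : PartialOrder NPoset :=
  { le := le, le_refl := le_refl', le_trans := le_trans', le_antisymm := le_antisymm' }

end NPoset

/-- the poset `B⁺`: five elements with `a < c`, `a < e`, `b < c`, `b < d`, `d < e`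
(and the relation `b < e` forced by transitivity). -/
inductive BPlusPoset : Type
  | a | b | c | d | e
  deriving DecidableEq

instance : Fintype BPlusPoset :=
  ⟨{BPlusPoset.a, BPlusPoset.b, BPlusPoset.c, BPlusPoset.d, BPlusPoset.e}, fun x => by cases x <;> simp⟩

namespace BPlusPoset

def le : BPlusPoset → BPlusPoset → Prop := fun x y =>
  x = y ∨ (x = a ∧ y = c) ∨ (x = a ∧ y = e) ∨ (x = b ∧ y = c) ∨ (x = b ∧ y = d) ∨
    (x = b ∧ y = e) ∨ (x = d ∧ y = e)

instance : DecidableRel le := fun x y => by unfold le; infer_instance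

theorem le_refl' : ∀ x : BPlusPoset, le x x := by decide
theorem le_trans' : ∀ x y z : BPlusPoset, le x y → le y z → le x z := by decide
theorem le_antisymm' : ∀ x y : BPlusPoset, le x y → le y x → x = y := by decide

instance : PartialOrder BPlusPoset :=
  { le := le, le_refl := le_refl', le_trans := le_trans', le_antisymm := le_antisymm' }

end BPlusPoset

/-- the poset `B⁺⁺`: five elements with `a, b < c, d` and `d < e`
(hence also `a < e` and `b < e`). -/
inductive BPlusPlusPoset : Type
  | a | b | c | d | e
  deriving DecidableEq

instance : Fintype BPlusPlusPoset :=
  ⟨{BPlusPlusPoset.a, BPlusPlusPoset.b, BPlusPlusPoset.c, BPlusPlusPoset.d, BPlusPlusPoset.e}, fun x => by cases x <;> simp⟩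

namespace BPlusPlusPoset

def le : BPlusPlusPoset → BPlusPlusPoset → Prop := fun x y =>
  x = y ∨ (x = a ∧ y = c) ∨ (x = a ∧ y = d) ∨ (x = a ∧ y = e) ∨ (x = b ∧ y = c) ∨
    (x = b ∧ y = d) ∨ (x = b ∧ y = e) ∨ (x = d ∧ y = e)

instance : DecidableRel le := fun x y => by unfold le; infer_instance

theorem le_refl' : ∀ x : BPlusPlusPoset, le x x := by decide
theorem le_trans' : ∀ x y z : BPlusPlusPoset, le x y → le y z → le x z := by decide
theorem le_antisymm' : ∀ x y : BPlusPlusPoset, le x y → le y x → x = y := by decide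

instance : PartialOrder BPlusPlusPoset :=
  { le := le, le_refl := le_refl', le_trans := le_trans', le_antisymm := le_antisymm' }

end BPlusPlusPoset

/-- the binary entropy function `h(x) = -x log₂ x - (1-x) log₂ (1-x)`. -/
def binEnt (x : ℝ) : ℝ := -x * Real.logb 2 x - (1 - x) * Real.logb 2 (1 - x)

/-!
Let `F` be `P_{l+2}`-free, `l = l(Q)`, and write `F_B = {A ∈ F | A ⊂ B}`. A copy of `Q ⊕ 1` in `F`
is a copy of `Q` in `F_B` together with its top set `B ∈ F`, so `c(Q ⊕ 1, F) ≤ ∑_B c(Q, F_B)`.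
Each `F_B` is a `P_{l+1}`-free family of subsets of `B`, so `c(Q, F_B) ≤ La(|B|, P_{l+1}, Q)`.
A copy of `Q` contains an `l`-chain; if it lies in `F_{B₁}` and `B₁ ⊂ B₂ ∈ F`, adding `B₁, B₂`
gives a `P_{l+2}` in `F`. Hence the sets `B` with `c(Q, F_B) ≠ 0` form an antichain, and the
LYM inequality bounds `∑_B La(|B|, P_{l+1}, Q)` by `max_j C(n, j) La(j, P_{l+1}, Q)`.
-/

section Copies

variable {α : Type} [PartialOrder α] [Fintype α] {n : ℕ}

theorem copyCount_ne_zero_iff {F : Finset (Finset (Fin n))} :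
    copyCount α F ≠ 0 ↔ ∃ G ⊆ F, IsCopy α G := by
  simp [copyCount]

theorem copyCount_mono {F F' : Finset (Finset (Fin n))} (h : F ⊆ F') :
    copyCount α F ≤ copyCount α F' :=
  card_le_card (filter_subset_filter _ (powerset_mono.mpr h))

theorem isCopy_pChain_iff {m : ℕ} {G : Finset (Finset (Fin n))} :
    IsCopy (PChain m) G ↔ G.card = m ∧ IsChain (· ⊆ ·) (G : Set (Finset (Fin n))) := by
  constructor
  · rintro ⟨φ, hinj, rfl, hmono⟩
    refine ⟨by rw [card_image_of_injective _ hinj, card_univ, Fintype.card_fin], ?_⟩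
    rw [coe_image, coe_univ, Set.image_univ]
    exact Monotone.isChain_range (f := φ) hmono
  · rintro ⟨hcard, hchain⟩
    let := IsChain.linearOrder (α := Finset (Fin n)) hchain
    let e := Fintype.orderIsoFinOfCardEq (G : Set (Finset (Fin n))) (by simpa using hcard)
    refine ⟨fun i => (e i).1, Subtype.val_injective.comp e.injective, ?_,
      fun i j hij => e.monotone hij⟩
    ext A
    simp only [mem_image, mem_univ, true_and]
    exact ⟨fun ⟨i, hi⟩ => hi ▸ (e i).2, fun hA => ⟨e.symm ⟨A, hA⟩, by simp⟩⟩

end Copies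

section Chains

variable {n : ℕ}

theorem copyCount_pChain_filter_ssubset_eq_zero {m : ℕ} {F : Finset (Finset (Fin n))}
    (hF : copyCount (PChain (m + 1)) F = 0) {B : Finset (Fin n)} (hB : B ∈ F) :
    copyCount (PChain m) (F.filter (· ⊂ B)) = 0 := by
  contrapose! hF
  obtain ⟨G, hGF, hG⟩ := copyCount_ne_zero_iff.mp hF
  rw [isCopy_pChain_iff] at hG
  have hlt : ∀ A ∈ G, A ⊂ B := fun A hA => (mem_filter.mp (hGF hA)).2
  have hBG : B ∉ G := fun h => (hlt B h).ne rfl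
  refine copyCount_ne_zero_iff.mpr ⟨insert B G, insert_subset hB (hGF.trans (filter_subset _ _)),
    isCopy_pChain_iff.mpr ⟨by rw [card_insert_of_notMem hBG, hG.1], ?_⟩⟩
  rw [coe_insert]
  exact hG.2.insert fun A hA _ => Or.inr (hlt A hA).subset

theorem exists_isChain_card_eq_height (Q : Type) [PartialOrder Q] [Fintype Q] :
    ∃ C : Finset Q, IsChain (· ≤ ·) (C : Set Q) ∧ C.card = height Q := by
  obtain ⟨C, hC, hcard⟩ := exists_mem_eq_sup
    (univ.filter fun C : Finset Q => IsChain (· ≤ ·) (C : Set Q)) ⟨∅, by simp⟩ card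
  exact ⟨C, (mem_filter.mp hC).2, hcard.symm⟩

theorem copyCount_pChain_height_ne_zero {Q : Type} [PartialOrder Q] [Fintype Q]
    {F : Finset (Finset (Fin n))} (hF : copyCount Q F ≠ 0) :
    copyCount (PChain (height Q)) F ≠ 0 := by
  obtain ⟨G, hGF, φ, hinj, rfl, hmono⟩ := copyCount_ne_zero_iff.mp hF
  obtain ⟨C, hC, hcard⟩ := exists_isChain_card_eq_height Q
  refine copyCount_ne_zero_iff.mpr ⟨C.image φ, (image_subset_image (subset_univ C)).trans hGF,
    isCopy_pChain_iff.mpr ⟨by rw [card_image_of_injective _ hinj, hcard], ?_⟩⟩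
  rw [coe_image]
  exact hC.image_of_map_rel _ _ φ hmono

end Chains

section Transfer

variable {α : Type} [PartialOrder α] [Fintype α] {n m : ℕ}
  {g : Finset (Fin n) → Finset (Fin m)} {F : Finset (Finset (Fin n))}

theorem injOn_of_subset_iff (hg : ∀ A ∈ F, ∀ A' ∈ F, g A ⊆ g A' ↔ A ⊆ A') :
    Set.InjOn g F := fun A hA A' hA' h =>
  ((hg A hA A' hA').mp h.subset).antisymm ((hg A' hA' A hA).mp h.symm.subset)

theorem isCopy_image_iff (hg : ∀ A ∈ F, ∀ A' ∈ F, g A ⊆ g A' ↔ A ⊆ A')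
    {G : Finset (Finset (Fin n))} (hGF : G ⊆ F) :
    IsCopy α (G.image g) ↔ IsCopy α G := by
  have hinjOn : Set.InjOn g G := (injOn_of_subset_iff hg).mono (by simpa using hGF)
  constructor
  · rintro ⟨ψ, hψinj, hψ, hψmono⟩
    have hmem : ∀ a, ψ a ∈ G.image g := fun a => hψ ▸ mem_image_of_mem ψ (mem_univ a)
    choose φ hφG hφ using fun a => mem_image.mp (hmem a)
    refine ⟨φ, fun a b h => hψinj (by rw [← hφ, ← hφ, h]), ?_, fun x y hxy => ?_⟩
    · refine (image_subset_iff.mpr fun a _ => hφG a).antisymm fun A hA => ?_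
      obtain ⟨a, -, ha⟩ := mem_image.mp (hψ ▸ mem_image_of_mem g hA)
      exact mem_image.mpr ⟨a, mem_univ a, hinjOn (hφG a) hA ((hφ a).trans ha)⟩
    · exact (hg _ (hGF (hφG x)) _ (hGF (hφG y))).mp (by rw [hφ, hφ]; exact hψmono x y hxy)
  · rintro ⟨φ, hφinj, rfl, hφmono⟩
    have hφF : ∀ a, φ a ∈ F := fun a => hGF (mem_image_of_mem φ (mem_univ a))
    refine ⟨g ∘ φ, fun a b h => hφinj (hinjOn (mem_image_of_mem φ (mem_univ a))
      (mem_image_of_mem φ (mem_univ b)) h), image_image.symm, fun x y hxy => ?_⟩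
    exact (hg _ (hφF x) _ (hφF y)).mpr (hφmono x y hxy)

theorem copyCount_image_eq (hg : ∀ A ∈ F, ∀ A' ∈ F, g A ⊆ g A' ↔ A ⊆ A') :
    copyCount α (F.image g) = copyCount α F := by
  have hinjOn := injOn_of_subset_iff hg
  unfold copyCount
  have image_pullback : ∀ H ⊆ F.image g, (F.filter (g · ∈ H)).image g = H := fun H hH => by
    ext B
    simp only [mem_image, mem_filter]
    exact ⟨fun ⟨A, ⟨_, hAH⟩, hAB⟩ => hAB ▸ hAH, fun hB => by
      obtain ⟨A, hA, rfl⟩ := mem_image.mp (hH hB)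
      exact ⟨A, ⟨hA, hB⟩, rfl⟩⟩
  have pullback_image : ∀ G ⊆ F, F.filter (g · ∈ G.image g) = G := fun G hGF => by
    ext A
    simp only [mem_filter, mem_image]
    exact ⟨fun ⟨hA, A', hA', hgA⟩ => hinjOn (hGF hA') hA hgA ▸ hA',
      fun hA => ⟨hGF hA, A, hA, rfl⟩⟩
  refine card_nbij' (fun H => F.filter (g · ∈ H)) (fun G => G.image g) ?_ ?_ ?_ ?_
  all_goals simp only [coe_filter, mem_powerset]
  · rintro H ⟨hH, hcopy⟩
    refine ⟨filter_subset _ _, (isCopy_image_iff hg (filter_subset _ _)).mp ?_⟩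
    rwa [image_pullback H hH]
  · rintro G ⟨hGF, hcopy⟩
    exact ⟨image_subset_image hGF, (isCopy_image_iff hg hGF).mpr hcopy⟩
  · exact fun H hH => image_pullback H hH.1
  · exact fun G hG => pullback_image G hG.1

end Transfer

section Restriction

variable {n : ℕ}

def restrictTo (B A : Finset (Fin n)) : Finset (Fin B.card) :=
  univ.filter fun i => (B.equivFin.symm i : Fin n) ∈ A

theorem restrictTo_subset_restrictTo_iff {B A A' : Finset (Fin n)} (hA : A ⊆ B) :
    restrictTo B A ⊆ restrictTo B A' ↔ A ⊆ A' := by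
  refine ⟨fun h x hx => ?_, fun h i hi => ?_⟩
  · have hmem : B.equivFin ⟨x, hA hx⟩ ∈ restrictTo B A := by simpa [restrictTo] using hx
    simpa [restrictTo] using h hmem
  · simp only [restrictTo, mem_filter, mem_univ, true_and] at hi ⊢
    exact h hi

theorem copyCount_le_La_card {P Q : Type} [PartialOrder P] [Fintype P] [PartialOrder Q]
    [Fintype Q] {F : Finset (Finset (Fin n))} {B : Finset (Fin n)} (hFB : ∀ A ∈ F, A ⊆ B)
    (hF : copyCount P F = 0) :
    copyCount Q F ≤ La B.card P Q := by
  have hrestrict : ∀ A ∈ F, ∀ A' ∈ F, restrictTo B A ⊆ restrictTo B A' ↔ A ⊆ A' :=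
    fun A hA A' _ => restrictTo_subset_restrictTo_iff (hFB A hA)
  rw [← copyCount_image_eq hrestrict]
  exact le_sup (mem_filter.mpr ⟨mem_univ _, (copyCount_image_eq hrestrict).trans hF⟩)

end Restriction

section OplusOne

variable {Q : Type} [PartialOrder Q] {n : ℕ}

theorem Oplus.le_new_zero : ∀ x : Oplus Q 1, x ≤ .new 0
  | .base _ => trivial
  | .new i => by rw [Fin.fin_one_eq_zero i]

theorem exists_top_of_isCopy_oplus_one [Fintype Q] {G : Finset (Finset (Fin n))}
    (h : IsCopy (Oplus Q 1) G) : ∃ B ∈ G, (∀ A ∈ G, A ⊆ B) ∧ IsCopy Q (G.erase B) := by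
  obtain ⟨φ, hinj, rfl, hmono⟩ := h
  refine ⟨φ (.new 0), mem_image_of_mem φ (mem_univ _), ?_,
    φ ∘ .base, hinj.comp fun _ _ h => by cases h; rfl, ?_, fun x y hxy => hmono _ _ hxy⟩
  · simp only [mem_image, mem_univ, true_and, forall_exists_index, forall_apply_eq_imp_iff]
    exact fun x => hmono _ _ x.le_new_zero
  · ext A
    simp only [mem_image, mem_univ, true_and, mem_erase, Function.comp_apply]
    constructor
    · rintro ⟨q, rfl⟩
      exact ⟨fun h => (nomatch hinj h), Oplus.base q, rfl⟩
    · rintro ⟨hA, x, rfl⟩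
      cases x with
      | base q => exact ⟨q, rfl⟩
      | new i => exact absurd (by rw [Fin.fin_one_eq_zero i]) hA

theorem sup_id_mem_of_isCopy_oplus_one [Fintype Q] {G : Finset (Finset (Fin n))}
    (h : IsCopy (Oplus Q 1) G) : G.sup id ∈ G := by
  obtain ⟨B, hBG, hle, -⟩ := exists_top_of_isCopy_oplus_one h
  rwa [sup_eq_of_isMaxOn (D := id) hBG (isMaxOn_iff.mpr hle), id]

theorem isCopy_erase_sup_id_of_isCopy_oplus_one [Fintype Q] {G : Finset (Finset (Fin n))}
    (h : IsCopy (Oplus Q 1) G) : IsCopy Q (G.erase (G.sup id)) := by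
  obtain ⟨B, hBG, hle, hcopy⟩ := exists_top_of_isCopy_oplus_one h
  rwa [sup_eq_of_isMaxOn (D := id) hBG (isMaxOn_iff.mpr hle), id]

theorem copyCount_oplus_one_le [Fintype Q] (F : Finset (Finset (Fin n))) :
    copyCount (Oplus Q 1) F ≤ ∑ B ∈ F, copyCount Q (F.filter (· ⊂ B)) := by
  unfold copyCount
  rw [← card_sigma]
  refine card_le_card_of_injOn (fun G => ⟨G.sup id, G.erase (G.sup id)⟩) ?_ ?_
  · intro G hG
    rw [mem_coe, mem_filter, mem_powerset] at hG
    simp only [mem_coe, mem_sigma, mem_filter, mem_powerset]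
    refine ⟨hG.1 (sup_id_mem_of_isCopy_oplus_one hG.2), fun A hA => ?_,
      isCopy_erase_sup_id_of_isCopy_oplus_one hG.2⟩
    obtain ⟨hAB, hAG⟩ := mem_erase.mp hA
    exact mem_filter.mpr ⟨hG.1 hAG, ssubset_of_subset_of_ne (le_sup (f := id) hAG) hAB⟩
  · intro G₁ hG₁ G₂ hG₂ h
    rw [mem_coe, mem_filter] at hG₁ hG₂
    obtain ⟨hsup, herase⟩ := Sigma.mk.inj_iff.mp h
    rw [← insert_erase (sup_id_mem_of_isCopy_oplus_one hG₁.2),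
      ← insert_erase (sup_id_mem_of_isCopy_oplus_one hG₂.2), eq_of_heq herase, hsup]

end OplusOne

theorem isAntichain_filter_copyCount_ne_zero {Q : Type} [PartialOrder Q] [Fintype Q] {n : ℕ}
    {F : Finset (Finset (Fin n))} (hF : copyCount (PChain (height Q + 2)) F = 0) :
    IsAntichain (· ⊆ ·)
      (F.filter fun B => copyCount Q (F.filter (· ⊂ B)) ≠ 0 : Set (Finset (Fin n))) := by
  intro B₁ hB₁ B₂ hB₂ hne hsub
  rw [mem_coe, mem_filter] at hB₁ hB₂
  have hlt : B₁ ⊂ B₂ := ssubset_of_subset_of_ne hsub hne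
  have hfree : copyCount (PChain (height Q)) ((F.filter (· ⊂ B₂)).filter (· ⊂ B₁)) = 0 :=
    copyCount_pChain_filter_ssubset_eq_zero (copyCount_pChain_filter_ssubset_eq_zero hF hB₂.1)
      (mem_filter.mpr ⟨hB₁.1, hlt⟩)
  refine copyCount_pChain_height_ne_zero hB₁.2
    (Nat.eq_zero_of_le_zero (hfree ▸ copyCount_mono ?_))
  intro A hA
  obtain ⟨hAF, hAB₁⟩ := mem_filter.mp hA
  exact mem_filter.mpr ⟨mem_filter.mpr ⟨hAF, hAB₁.trans hlt⟩, hAB₁⟩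

theorem sum_le_sup_choose_mul_of_isAntichain {n : ℕ} {T : Finset (Finset (Fin n))}
    (hT : IsAntichain (· ⊆ ·) (T : Set (Finset (Fin n)))) (f : ℕ → ℕ) :
    ∑ B ∈ T, f B.card ≤ (range (n + 1)).sup fun j => n.choose j * f j := by
  set M := (range (n + 1)).sup fun j => n.choose j * f j
  have hM : ∀ r ∈ range (n + 1), (n.choose r * f r : ℚ) ≤ M := fun r hr => by
    exact_mod_cast le_sup (f := fun j => n.choose j * f j) hr
  have hLYM := sum_card_slice_div_choose_le_one (𝕜 := ℚ) hT
  rw [Fintype.card_fin] at hLYM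
  have hcard : ∀ B ∈ T, B.card ∈ range (n + 1) := fun B _ =>
    mem_range_succ_iff.mpr (card_le_univ B |>.trans_eq (Fintype.card_fin n))
  suffices (∑ B ∈ T, f B.card : ℚ) ≤ M by exact_mod_cast this
  calc (∑ B ∈ T, f B.card : ℚ)
      = ∑ r ∈ range (n + 1), ((T.slice r).card : ℚ) * f r := by
        rw [← sum_fiberwise_of_maps_to hcard]
        refine sum_congr rfl fun r _ => ?_
        rw [sum_congr rfl fun B hB => by rw [(mem_filter.mp hB).2], sum_const, nsmul_eq_mul]
        rfl
    _ = ∑ r ∈ range (n + 1), ((T.slice r).card / n.choose r : ℚ) * (n.choose r * f r) := by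
        refine sum_congr rfl fun r hr => ?_
        have : (n.choose r : ℚ) ≠ 0 := by
          exact_mod_cast (Nat.choose_pos (mem_range_succ_iff.mp hr)).ne'
        field_simp
    _ ≤ ∑ r ∈ range (n + 1), ((T.slice r).card / n.choose r : ℚ) * M := by
        gcongr with r hr
        exact hM r hr
    _ ≤ M := by
        rw [← sum_mul]
        exact mul_le_of_le_one_left (Nat.cast_nonneg M) hLYM

theorem La_pChain_oplus_one_le_sup (Q : Type) [PartialOrder Q] [Fintype Q] (n : ℕ) :
    La n (PChain (height Q + 2)) (Oplus Q 1) ≤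
      (range (n + 1)).sup fun j => n.choose j * La j (PChain (height Q + 1)) Q := by
  refine Finset.sup_le fun F hF => ?_
  have hfree : copyCount (PChain (height Q + 2)) F = 0 := (mem_filter.mp hF).2
  calc copyCount (Oplus Q 1) F
      ≤ ∑ B ∈ F, copyCount Q (F.filter (· ⊂ B)) := copyCount_oplus_one_le F
    _ = ∑ B ∈ F.filter (fun B => copyCount Q (F.filter (· ⊂ B)) ≠ 0),
          copyCount Q (F.filter (· ⊂ B)) := (sum_filter_ne_zero _).symm
    _ ≤ ∑ B ∈ F.filter (fun B => copyCount Q (F.filter (· ⊂ B)) ≠ 0),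
          La B.card (PChain (height Q + 1)) Q := by
        refine sum_le_sum fun B hB => copyCount_le_La_card (fun A hA => (mem_filter.mp hA).2.subset)
          (copyCount_pChain_filter_ssubset_eq_zero hfree (mem_filter.mp hB).1)
    _ ≤ _ := sum_le_sup_choose_mul_of_isAntichain
        (isAntichain_filter_copyCount_ne_zero hfree) fun j => La j (PChain (height Q + 1)) Q

theorem statement15_general (Q : Type) [PartialOrder Q] [Fintype Q]
    (n : ℕ) :
    ∃ j : ℕ, j ≤ n ∧
      La n (PChain (height Q + 2)) (Oplus Q 1) ≤
        n.choose j * La j (PChain (height Q + 1)) Q := by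
  obtain ⟨j, hj, hsup⟩ := exists_mem_eq_sup (range (n + 1)) nonempty_range_add_one
    fun j => n.choose j * La j (PChain (height Q + 1)) Q
  exact ⟨j, mem_range_succ_iff.mp hj, hsup ▸ La_pChain_oplus_one_le_sup Q n⟩

theorem statement15 (Q : Type) [PartialOrder Q] [Fintype Q] [Nonempty Q]
    (n : ℕ) (hn : 1 ≤ n) :
    ∃ j : ℕ, j ≤ n ∧
      La n (PChain (height Q + 2)) (Oplus Q 1) ≤
        n.choose j * La j (PChain (height Q + 1)) Q :=
  statement15_general Q n

end
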